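/- Let u be a harmonic function in the upper half plane ℍ with sup_{z ∈ ℍ} Im(z) |∇u(z)| ≤ A, let E ⊂ ℝ be nonempty, let c ∈ ℝ, y₀ > 0 and K ≥ 0, and suppose that |u(x + iy) − c| ≤ K for every x ∈ E and every 0 < y ≤ y₀. Then for every point w = x + iy ∈ ℍ with dist(x, E) ≤ y ≤ y₀ one has |u(w) − c| ≤ K + A. -/

import Mathlib

open Set Metric MeasureTheory Filter Topology
open scoped ENNReal NNReal

noncomputable section

/-- The open upper half plane in `ℂ`. -/
def UHP : Set ℂ := {z : ℂ | 0 < z.im}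

/-- The `α`-dimensional Hausdorff content of a set. -/
def hContent {X : Type*} [PseudoEMetricSpace X] (α : ℝ) (A : Set X) : ℝ≥0∞ :=
  ⨅ (E : ℕ → Set X) (_ : A ⊆ ⋃ n, E n), ∑' n, EMetric.diam (E n) ^ α

/-- `Ω` is a `C`-John domain with center `z₀`: every point of `Ω` can be joined to `z₀`
by a rectifiable curve in `Ω` along which the distance to the boundary dominates
(up to the factor `C`) the length of the subcurve already traversed. -/
def IsJohnDomain (C : ℝ) (Ω : Set ℂ) (z₀ : ℂ) : Prop :=
  z₀ ∈ Ω ∧ ∀ z ∈ Ω, ∃ γ : ℝ → ℂ,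
    ContinuousOn γ (Set.Icc 0 1) ∧ γ 0 = z ∧ γ 1 = z₀ ∧
    (∀ t ∈ Set.Icc (0:ℝ) 1, γ t ∈ Ω) ∧
    eVariationOn γ (Set.Icc 0 1) ≠ ⊤ ∧
    ∀ t ∈ Set.Icc (0:ℝ) 1,
      (eVariationOn γ (Set.Icc 0 t)).toReal ≤ C * infDist (γ t) (frontier Ω)

/-- `u` is harmonic on the upper half plane: it is `C²` there and satisfies
`u_xx + u_yy = 0`. -/
def HarmonicOnH (u : ℂ → ℝ) : Prop :=
  ContDiffOn ℝ 2 u UHP ∧ ∀ z ∈ UHP,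
    fderiv ℝ (fun w => fderiv ℝ u w 1) z 1 +
      fderiv ℝ (fun w => fderiv ℝ u w Complex.I) z Complex.I = 0

/-- For an interval `I = [c, d]`, the point `z_I = x_I + i |I|` where `x_I` is the center. -/
def zI (c d : ℝ) : ℂ := ((c + d) / 2 : ℝ) + (d - c) * Complex.I

/-- The square `Q(I) = {x + iy : x ∈ I, 0 < y < |I|}` over the interval `I = [c, d]`. -/
def Qsq (c d : ℝ) : Set ℂ := {z : ℂ | z.re ∈ Set.Icc c d ∧ z.im ∈ Set.Ioo 0 (d - c)}

/-- `[c, d]` is a dyadic subinterval of `[a, b]`, i.e. obtained by repeated bisection. -/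
def IsDyadicSub (a b c d : ℝ) : Prop :=
  ∃ n k : ℕ, k < 2 ^ n ∧ c = a + k * (b - a) / 2 ^ n ∧ d = a + (k + 1) * (b - a) / 2 ^ n

/-- The family `F(I)` of maximal dyadic subintervals `J` of `I = [a, b]` with
`|u(z_J) - u(z_I)| ≥ M`, encoded as pairs of endpoints. -/
def MaxF (u : ℂ → ℝ) (a b M : ℝ) : Set (ℝ × ℝ) :=
  {p : ℝ × ℝ | IsDyadicSub a b p.1 p.2 ∧ M ≤ |u (zI p.1 p.2) - u (zI a b)| ∧
    ∀ c d : ℝ, IsDyadicSub a b c d → M ≤ |u (zI c d) - u (zI a b)| →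
      Set.Icc p.1 p.2 ⊆ Set.Icc c d → c = p.1 ∧ d = p.2}

/-- The set `G(I)` of points `x` of `I = [a, b]` over whose whole vertical segment in `Q(I)`
the oscillation `|u - u(z_I)|` is at most `M + A√2`. -/
def GSet (u : ℂ → ℝ) (a b M A : ℝ) : Set ℝ :=
  {x ∈ Set.Icc a b | ∀ y : ℝ, 0 < y → y < b - a →
    |u ((x : ℂ) + y * Complex.I) - u (zI a b)| ≤ M + A * Real.sqrt 2}

/-- The sawtooth region `S(E)` over `E ⊆ (x₀ - y₀/2, x₀ + y₀/2)`. -/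
def Sawtooth (E : Set ℝ) (x₀ y₀ : ℝ) : Set ℂ :=
  {z : ℂ | z.re ∈ Set.Ioo (x₀ - y₀ / 2) (x₀ + y₀ / 2) ∧ 0 < z.im ∧
    infDist z.re E ≤ z.im ∧ z.im < y₀}

/-!
Along the horizontal line at height `y`, the gradient bound makes `u` Lipschitz with constant
`A / y`. Comparing `x + iy` with `x' + iy` for `x' ∈ E` and taking the infimum over `x'` gives
`|u(x + iy) - c| ≤ K + (A / y) dist(x, E) ≤ K + A`.
-/

lemma isOpen_UHP : IsOpen UHP := isOpen_lt continuous_const Complex.continuous_im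

lemma HarmonicOnH.differentiableAt {u : ℂ → ℝ} (hu : HarmonicOnH u) {z : ℂ} (hz : z ∈ UHP) :
    DifferentiableAt ℝ u z :=
  (hu.1.contDiffAt (isOpen_UHP.mem_nhds hz)).differentiableAt two_ne_zero

lemma nonneg_of_forall_im_mul_norm_fderiv_le {F : Type*} [NormedAddCommGroup F]
    [NormedSpace ℝ F] {f : ℂ → F} {A : ℝ} (hb : ∀ z ∈ UHP, z.im * ‖fderiv ℝ f z‖ ≤ A) :
    0 ≤ A := by
  have hI := hb Complex.I (by simp [UHP])
  rw [Complex.I_im, one_mul] at hI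
  exact (norm_nonneg _).trans hI

lemma norm_sub_le_of_forall_im_mul_norm_fderiv_le {F : Type*} [NormedAddCommGroup F]
    [NormedSpace ℝ F] {f : ℂ → F} {A y : ℝ} (hf : ∀ z ∈ UHP, DifferentiableAt ℝ f z)
    (hb : ∀ z ∈ UHP, z.im * ‖fderiv ℝ f z‖ ≤ A) (hy : 0 < y) (x x' : ℝ) :
    ‖f (x + y * Complex.I) - f (x' + y * Complex.I)‖ ≤ A / y * dist x x' := by
  have hline : ∀ z ∈ {z : ℂ | z.im = y}, z ∈ UHP := fun z hz => by
    simp only [UHP, mem_ofPred_eq, hz.out, hy]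
  have hderiv : ∀ z ∈ {z : ℂ | z.im = y}, ‖fderiv ℝ f z‖ ≤ A / y := fun z hz => by
    rw [le_div_iff₀' hy, ← hz.out]
    exact hb z (hline z hz)
  have hdist : ‖(x + y * Complex.I : ℂ) - (x' + y * Complex.I)‖ = dist x x' := by
    rw [add_sub_add_right_eq_sub, ← Complex.ofReal_sub, Complex.norm_real, Real.dist_eq,
      Real.norm_eq_abs]
  rw [← hdist]
  exact (convex_hyperplane Complex.imLm.isLinear y).norm_image_sub_le_of_norm_fderiv_le
    (fun z hz => hf z (hline z hz)) hderiv (by simp) (by simp)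

lemma le_add_mul_infDist {α : Type*} [PseudoMetricSpace α] {x : α} {E : Set α} {a K L : ℝ}
    (hE : E.Nonempty) (hL : 0 ≤ L) (h : ∀ x' ∈ E, a ≤ K + L * dist x x') :
    a ≤ K + L * infDist x E := by
  have : Nonempty E := hE.to_subtype
  rw [infDist_eq_iInf, Real.mul_iInf_of_nonneg hL, add_comm]
  exact le_ciInf_add fun x' => by rw [add_comm]; exact h x' x'.2

theorem sawtooth_bound_propagation_general (u : ℂ → ℝ) (A : ℝ) (hh : HarmonicOnH u)
    (hb : ∀ z ∈ UHP, z.im * ‖fderiv ℝ u z‖ ≤ A)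
    (E : Set ℝ) (hE : E.Nonempty) (c y₀ K : ℝ)
    (hseg : ∀ x ∈ E, ∀ y : ℝ, 0 < y → y ≤ y₀ → |u ((x : ℂ) + y * Complex.I) - c| ≤ K) :
    ∀ x y : ℝ, 0 < y → y ≤ y₀ → infDist x E ≤ y →
      |u ((x : ℂ) + y * Complex.I) - c| ≤ K + A := by
  intro x y hy hyy₀ hdist
  have hA : 0 ≤ A := nonneg_of_forall_im_mul_norm_fderiv_le hb
  have hnear : ∀ x' ∈ E, |u (x + y * Complex.I) - c| ≤ K + A / y * dist x x' := by
    intro x' hx'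
    calc |u (x + y * Complex.I) - c|
        ≤ |u (x' + y * Complex.I) - c| + |u (x + y * Complex.I) - u (x' + y * Complex.I)| :=
          (abs_sub_le _ _ _).trans_eq (add_comm _ _)
      _ ≤ K + A / y * dist x x' :=
          add_le_add (hseg x' hx' y hy hyy₀) (by
            simpa only [Real.norm_eq_abs] using norm_sub_le_of_forall_im_mul_norm_fderiv_le
              (fun z hz => hh.differentiableAt hz) hb hy x x')
  calc |u (x + y * Complex.I) - c|
      ≤ K + A / y * infDist x E := le_add_mul_infDist hE (by positivity) hnear
    _ ≤ K + A / y * y := by gcongr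
    _ = K + A := by rw [div_mul_cancel₀ A hy.ne']

/-- bounds on a harmonic Bloch-type function over vertical segments based
on `E` propagate to the whole sawtooth region over `E`, with error `A`. -/
theorem sawtooth_bound_propagation (u : ℂ → ℝ) (A : ℝ) (hh : HarmonicOnH u)
    (hb : ∀ z ∈ UHP, z.im * ‖fderiv ℝ u z‖ ≤ A)
    (E : Set ℝ) (hE : E.Nonempty) (c y₀ K : ℝ) (hy₀ : 0 < y₀) (hK : 0 ≤ K)
    (hseg : ∀ x ∈ E, ∀ y : ℝ, 0 < y → y ≤ y₀ → |u ((x : ℂ) + y * Complex.I) - c| ≤ K) :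
    ∀ x y : ℝ, 0 < y → y ≤ y₀ → infDist x E ≤ y →
      |u ((x : ℂ) + y * Complex.I) - c| ≤ K + A :=
  sawtooth_bound_propagation_general u A hh hb E hE c y₀ K hseg
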